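/- Distributions with the same mean and same coefficient of variation can give different speedups: let U₁, U₂ be i.i.d. uniform on [0,2] and V₁, V₂ be i.i.d. Erlang with shape 3 and rate 3 (density (27/2)x²e^{−3x}); both distributions have mean 1 and coefficient of variation 1/√3, but E[min(U₁,U₂)] = 2/3 while E[min(V₁,V₂)] = ∫₀^∞ e^{−6x}(1 + 3x + 9x²/2)² dx > 2/3, so the speedup for the uniform pair is strictly larger. -/

import Mathlib

/-!
If `X`, `Y` are independent and nonnegative with common law `ν`, the layer-cake formula gives
`E[min X Y] = ∫₀^∞ P(X > t) P(Y > t) dt = ∫₀^∞ ν(t, ∞)² dt`. The uniform law on `[0, 2]` has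
survival function `(2 - t) / 2`, whose square integrates to `2 / 3`; the Erlang(3, 3) law has
survival function `e^{-3t} (1 + 3t + 9t²/2)`, whose square integrates to `11 / 16 > 2 / 3`.
Every integral against the Erlang law reduces to `∫₀^∞ xⁿ e^{-rx} dx = n! / r^{n+1}`.
-/

open MeasureTheory ProbabilityTheory Real Set Filter Topology
open scoped Nat

theorem ciInf_fin_two {α : Type*} [ConditionallyCompleteLinearOrder α] (g : Fin 2 → α) :
    ⨅ i, g i = min (g 0) (g 1) := by
  refine le_antisymm (le_min (ciInf_le (finite_range g).bddBelow 0)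
    (ciInf_le (finite_range g).bddBelow 1)) (le_ciInf fun i => ?_)
  fin_cases i
  exacts [min_le_left _ _, min_le_right _ _]

section IndependentMinimum

variable {Ω : Type*} [MeasurableSpace Ω] {μ : Measure Ω}

theorem integral_comp_eq_of_map_eq {X : Ω → ℝ} {ν : Measure ℝ} (hX : Measurable X)
    (hXν : μ.map X = ν) {f : ℝ → ℝ} (hf : Measurable f) :
    ∫ ω, f (X ω) ∂μ = ∫ x, f x ∂ν := by
  rw [← hXν, integral_map hX.aemeasurable hf.aestronglyMeasurable]

theorem integral_min_eq_integral_measureReal_Ioi_sq {X Y : Ω → ℝ} {ν : Measure ℝ}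
    (hX : Measurable X) (hY : Measurable Y) (hXY : IndepFun X Y μ)
    (hXν : μ.map X = ν) (hYν : μ.map Y = ν) (hν_nonneg : ∀ᵐ x ∂ν, 0 ≤ x)
    (hν_int : Integrable id ν) :
    ∫ ω, min (X ω) (Y ω) ∂μ = ∫ t in Ioi 0, ν.real (Ioi t) ^ 2 := by
  have hX_nonneg : ∀ᵐ ω ∂μ, 0 ≤ X ω := ae_of_ae_map hX.aemeasurable (hXν ▸ hν_nonneg)
  have hY_nonneg : ∀ᵐ ω ∂μ, 0 ≤ Y ω := ae_of_ae_map hY.aemeasurable (hYν ▸ hν_nonneg)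
  have hX_int : Integrable X μ :=
    (integrable_map_measure aestronglyMeasurable_id hX.aemeasurable).mp (hXν ▸ hν_int)
  have hmin_int : Integrable (fun ω => min (X ω) (Y ω)) μ := by
    refine hX_int.mono (hX.min hY).aestronglyMeasurable ?_
    filter_upwards [hX_nonneg, hY_nonneg] with ω hXω hYω
    simp only [Real.norm_eq_abs, abs_of_nonneg hXω, abs_of_nonneg (le_min hXω hYω)]
    exact min_le_left _ _
  have hmin_nonneg : 0 ≤ᵐ[μ] fun ω => min (X ω) (Y ω) := by
    filter_upwards [hX_nonneg, hY_nonneg] with ω hXω hYω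
    exact le_min hXω hYω
  rw [hmin_int.integral_eq_integral_meas_lt hmin_nonneg]
  refine setIntegral_congr_fun measurableSet_Ioi fun t _ => ?_
  have hpre : {ω | t < min (X ω) (Y ω)} = X ⁻¹' Ioi t ∩ Y ⁻¹' Ioi t := by
    ext ω; simp
  rw [hpre, measureReal_def,
    hXY.measure_inter_preimage_eq_mul _ _ measurableSet_Ioi measurableSet_Ioi,
    ← Measure.map_apply hX measurableSet_Ioi, ← Measure.map_apply hY measurableSet_Ioi, hXν, hYν,
    ENNReal.toReal_mul, measureReal_def, sq]

end IndependentMinimum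

theorem integrableOn_pow_mul_exp_neg_mul_Ioi (n : ℕ) {r : ℝ} (hr : 0 < r) :
    IntegrableOn (fun x => x ^ n * exp (-(r * x))) (Ioi 0) := by
  refine (integrableOn_rpow_mul_exp_neg_mul_rpow (s := n) (by linarith [n.cast_nonneg (α := ℝ)])
    one_pos hr).congr_fun (fun x _ => ?_) measurableSet_Ioi
  simp only [Real.rpow_natCast, Real.rpow_one, neg_mul]

theorem integral_pow_mul_exp_neg_mul_Ioi (n : ℕ) {r : ℝ} (hr : 0 < r) :
    ∫ x in Ioi 0, x ^ n * exp (-(r * x)) = n ! / r ^ (n + 1) := by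
  have h := integral_rpow_mul_exp_neg_mul_Ioi (a := n + 1) (by positivity) hr
  rw [add_sub_cancel_right, Gamma_nat_eq_factorial, ← Nat.cast_succ, Real.rpow_natCast] at h
  calc ∫ x in Ioi 0, x ^ n * exp (-(r * x)) = ∫ x in Ioi 0, x ^ (n : ℝ) * exp (-(r * x)) := by
        simp_rw [Real.rpow_natCast]
    _ = n ! / r ^ (n + 1) := by rw [h, one_div_pow, Nat.succ_eq_add_one]; ring

theorem integral_sum_pow_mul_exp_neg_mul_Ioi {n : ℕ} (c : Fin n → ℝ) {r : ℝ} (hr : 0 < r) :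
    ∫ x in Ioi 0, (∑ i, c i * x ^ (i : ℕ)) * exp (-(r * x))
      = ∑ i, c i * (i : ℕ)! / r ^ ((i : ℕ) + 1) := by
  simp_rw [Finset.sum_mul, mul_assoc]
  rw [integral_finsetSum _ fun (i : Fin n) _ =>
    (integrableOn_pow_mul_exp_neg_mul_Ioi i hr).const_mul (c i)]
  simp_rw [integral_const_mul, integral_pow_mul_exp_neg_mul_Ioi _ hr, mul_div_assoc]

noncomputable def uniform02 : Measure ℝ := ENNReal.ofReal (1 / 2) • volume.restrict (Icc (0 : ℝ) 2)

theorem integral_uniform02 (g : ℝ → ℝ) : ∫ x, g x ∂uniform02 = (∫ x in 0..2, g x) / 2 := by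
  rw [uniform02, integral_smul_measure, ENNReal.toReal_ofReal (by norm_num), smul_eq_mul,
    integral_Icc_eq_integral_Ioc, ← intervalIntegral.integral_of_le zero_le_two]
  ring

theorem integral_id_uniform02 : ∫ x, x ∂uniform02 = 1 := by
  rw [integral_uniform02, integral_id]
  norm_num

theorem integral_sub_one_sq_uniform02 : ∫ x, (x - 1) ^ 2 ∂uniform02 = 1 / 3 := by
  rw [integral_uniform02, intervalIntegral.integral_comp_sub_right (· ^ 2), integral_pow]
  norm_num

theorem ae_nonneg_uniform02 : ∀ᵐ x ∂uniform02, 0 ≤ x :=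
  Measure.ae_smul_measure (ae_restrict_of_forall_mem measurableSet_Icc fun _ hx => hx.1) _

theorem uniform02_Ioi {t : ℝ} (ht : 0 ≤ t) : uniform02 (Ioi t) = ENNReal.ofReal ((2 - t) / 2) := by
  have hIoc : Ioi t ∩ Icc 0 2 = Ioc t 2 := by
    ext x
    simp only [mem_inter_iff, mem_Ioi, mem_Icc, mem_Ioc]
    constructor
    · rintro ⟨htx, -, hx2⟩; exact ⟨htx, hx2⟩
    · rintro ⟨htx, hx2⟩; exact ⟨htx, ht.trans htx.le, hx2⟩
  rw [uniform02, Measure.smul_apply, Measure.restrict_apply measurableSet_Ioi, hIoc,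
    Real.volume_Ioc, smul_eq_mul, ← ENNReal.ofReal_mul (by norm_num)]
  ring_nf

theorem integral_uniform02_real_Ioi_sq : ∫ t in Ioi 0, uniform02.real (Ioi t) ^ 2 = 2 / 3 := by
  have hvanish : ∀ t ∈ Ioi (0 : ℝ) \ Ioc 0 2, uniform02.real (Ioi t) ^ 2 = 0 := by
    rintro t ⟨ht0, ht2⟩
    have ht2 : 2 < t := by simpa [mem_Ioi.mp ht0] using ht2
    rw [measureReal_def, uniform02_Ioi (le_of_lt ht0), ENNReal.ofReal_of_nonpos (by linarith)]
    simp
  have hlin : ∀ t ∈ Ioc (0 : ℝ) 2, uniform02.real (Ioi t) ^ 2 = ((2 - t) / 2) ^ 2 := by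
    rintro t ⟨ht0, ht2⟩
    rw [measureReal_def, uniform02_Ioi ht0.le, ENNReal.toReal_ofReal (by linarith)]
  rw [setIntegral_eq_of_subset_of_forall_sdiff_eq_zero measurableSet_Ioi Ioc_subset_Ioi_self
    hvanish, setIntegral_congr_fun measurableSet_Ioc hlin,
    ← intervalIntegral.integral_of_le zero_le_two,
    intervalIntegral.integral_comp_sub_left (fun u => (u / 2) ^ 2)]
  norm_num [div_pow, integral_pow]

noncomputable def erlang33Density (x : ℝ) : ℝ :=
  if 0 ≤ x then 27 / 2 * x ^ 2 * exp (-(3 * x)) else 0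

noncomputable def erlang33 : Measure ℝ :=
  volume.withDensity fun x => ENNReal.ofReal (erlang33Density x)

theorem erlang33Density_nonneg (x : ℝ) : 0 ≤ erlang33Density x := by
  unfold erlang33Density; split_ifs <;> positivity

theorem erlang33Density_of_nonneg {x : ℝ} (hx : 0 ≤ x) :
    erlang33Density x = 27 / 2 * x ^ 2 * exp (-(3 * x)) :=
  if_pos hx

theorem measurable_erlang33Density : Measurable erlang33Density :=
  Measurable.ite measurableSet_Ici (by fun_prop) measurable_const

theorem integral_erlang33 (g : ℝ → ℝ) :
    ∫ x, g x ∂erlang33 = ∫ x in Ioi 0, 27 / 2 * x ^ 2 * exp (-(3 * x)) * g x := by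
  rw [erlang33, integral_withDensity_eq_integral_toReal_smul
    measurable_erlang33Density.ennreal_ofReal (ae_of_all _ fun _ => ENNReal.ofReal_lt_top)]
  simp_rw [ENNReal.toReal_ofReal (erlang33Density_nonneg _), smul_eq_mul]
  rw [← setIntegral_eq_integral_of_forall_compl_eq_zero (s := Ioi 0) fun x hx => ?_]
  · exact setIntegral_congr_fun measurableSet_Ioi fun x hx => by
      rw [erlang33Density_of_nonneg (le_of_lt hx)]
  · rcases (notMem_Ioi.mp hx).lt_or_eq with hx | rfl
    · simp [erlang33Density, not_le.mpr hx]
    · simp [erlang33Density]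

theorem ae_nonneg_erlang33 : ∀ᵐ x ∂erlang33, 0 ≤ x := by
  refine (ae_withDensity_iff measurable_erlang33Density.ennreal_ofReal).mpr
    (ae_of_all _ fun x hx => ?_)
  by_contra hneg
  simp [erlang33Density, hneg] at hx

theorem integral_id_erlang33 : ∫ x, x ∂erlang33 = 1 := by
  have h := integral_sum_pow_mul_exp_neg_mul_Ioi ![0, 0, 0, 27 / 2] three_pos
  simp only [Fin.sum_univ_four, Matrix.cons_val, Fin.coe_ofNat_eq_mod] at h
  rw [integral_erlang33]
  convert h using 1
  · congr 1 with x; ring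
  · norm_num [Nat.factorial]

theorem integral_sub_one_sq_erlang33 : ∫ x, (x - 1) ^ 2 ∂erlang33 = 1 / 3 := by
  have h := integral_sum_pow_mul_exp_neg_mul_Ioi ![0, 0, 27 / 2, -27, 27 / 2] three_pos
  simp only [Fin.sum_univ_five, Matrix.cons_val, Fin.coe_ofNat_eq_mod] at h
  rw [integral_erlang33]
  convert h using 1
  · congr 1 with x; ring
  · norm_num [Nat.factorial]

theorem hasDerivAt_erlang33_survival (x : ℝ) :
    HasDerivAt (fun y => -(exp (-(3 * y)) * (1 + 3 * y + 9 * y ^ 2 / 2)))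
      (27 / 2 * x ^ 2 * exp (-(3 * x))) x := by
  have hexp : HasDerivAt (fun y => exp (-(3 * y))) (exp (-(3 * x)) * -3) x := by
    simpa using ((hasDerivAt_id x).const_mul 3).neg.exp
  have hpoly : HasDerivAt (fun y => 1 + 3 * y + 9 * y ^ 2 / 2) (3 + 9 * x) x :=
    ((((hasDerivAt_id x).const_mul 3).const_add 1).add
      (((hasDerivAt_pow 2 x).const_mul 9).div_const 2)).congr_deriv (by norm_num; ring)
  exact (hexp.mul hpoly).neg.congr_deriv (by ring)

theorem tendsto_erlang33_survival :
    Tendsto (fun y => exp (-(3 * y)) * (1 + 3 * y + 9 * y ^ 2 / 2)) atTop (𝓝 0) := by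
  have hterm (n : ℕ) : Tendsto (fun y => (3 * y) ^ n * exp (-(3 * y))) atTop (𝓝 0) :=
    (tendsto_pow_mul_exp_neg_atTop_nhds_zero n).comp (tendsto_id.const_mul_atTop three_pos)
  have h := ((hterm 0).add (hterm 1)).add ((hterm 2).const_mul (1 / 2))
  rw [add_zero, mul_zero, add_zero] at h
  exact h.congr fun y => by ring

theorem erlang33_real_Ioi {t : ℝ} (ht : 0 ≤ t) :
    erlang33.real (Ioi t) = exp (-(3 * t)) * (1 + 3 * t + 9 * t ^ 2 / 2) := by
  have hdens : EqOn erlang33Density (fun x => 27 / 2 * x ^ 2 * exp (-(3 * x))) (Ioi t) :=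
    fun x hx => erlang33Density_of_nonneg (ht.trans (le_of_lt hx))
  have hint_closed : IntegrableOn (fun x => 27 / 2 * x ^ 2 * exp (-(3 * x))) (Ioi t) :=
    (IntegrableOn.mono_set ((integrableOn_pow_mul_exp_neg_mul_Ioi 2 three_pos).const_mul
      (27 / 2)) (Ioi_subset_Ioi ht)).congr_fun (fun x _ => by ring) measurableSet_Ioi
  have hint : IntegrableOn erlang33Density (Ioi t) := hint_closed.congr_fun hdens.symm measurableSet_Ioi
  have hFTC := integral_Ioi_of_hasDerivAt_of_tendsto' (fun x _ => hasDerivAt_erlang33_survival x)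
    hint_closed tendsto_erlang33_survival.neg
  rw [measureReal_def, erlang33, withDensity_apply _ measurableSet_Ioi,
    ← ofReal_integral_eq_lintegral_ofReal hint (ae_of_all _ erlang33Density_nonneg),
    ENNReal.toReal_ofReal (setIntegral_nonneg measurableSet_Ioi fun x _ =>
      erlang33Density_nonneg x),
    setIntegral_congr_fun measurableSet_Ioi hdens, hFTC]
  ring

theorem integral_erlang33_real_Ioi_sq :
    ∫ t in Ioi 0, erlang33.real (Ioi t) ^ 2
      = ∫ x in Ioi 0, exp (-(6 * x)) * (1 + 3 * x + 9 * x ^ 2 / 2) ^ 2 := by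
  refine setIntegral_congr_fun measurableSet_Ioi fun t ht => ?_
  rw [erlang33_real_Ioi (le_of_lt ht), mul_pow, ← exp_nat_mul]
  ring_nf

theorem integral_Ioi_exp_neg_six_mul_mul_sq :
    ∫ x in Ioi 0, exp (-(6 * x)) * (1 + 3 * x + 9 * x ^ 2 / 2) ^ 2 = 11 / 16 := by
  have h := integral_sum_pow_mul_exp_neg_mul_Ioi ![1, 6, 18, 27, 81 / 4] (by norm_num : (0 : ℝ) < 6)
  simp only [Fin.sum_univ_five, Matrix.cons_val, Fin.coe_ofNat_eq_mod] at h
  convert h using 1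
  · congr 1 with x; ring
  · norm_num [Nat.factorial]

theorem same_cv_different_speedup_general {Ω : Type*} [MeasurableSpace Ω] (μ : Measure Ω)
    (U V : Fin 2 → Ω → ℝ)
    (hU : ∀ i, Measurable (U i)) (hV : ∀ i, Measurable (V i))
    (hindepU : iIndepFun U μ)
    (hindepV : iIndepFun V μ)
    (hdistU : ∀ i, μ.map (U i) = ENNReal.ofReal (1 / 2) • volume.restrict (Icc (0:ℝ) 2))
    (hdistV : ∀ i, μ.map (V i) = volume.withDensity
      (fun x => ENNReal.ofReal (if 0 ≤ x then (27 / 2) * x ^ 2 * Real.exp (-(3 * x)) else 0))) :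
    (∫ ω, U 0 ω ∂μ) = 1 ∧ (∫ ω, V 0 ω ∂μ) = 1 ∧
    (∫ ω, (U 0 ω - 1) ^ 2 ∂μ) = 1 / 3 ∧ (∫ ω, (V 0 ω - 1) ^ 2 ∂μ) = 1 / 3 ∧
    Real.sqrt (∫ ω, (U 0 ω - 1) ^ 2 ∂μ) / (∫ ω, U 0 ω ∂μ) = 1 / Real.sqrt 3 ∧
    Real.sqrt (∫ ω, (V 0 ω - 1) ^ 2 ∂μ) / (∫ ω, V 0 ω ∂μ) = 1 / Real.sqrt 3 ∧
    (∫ ω, (⨅ i, U i ω) ∂μ) = 2 / 3 ∧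
    (∫ ω, (⨅ i, V i ω) ∂μ)
      = (∫ x in Ioi (0:ℝ), Real.exp (-(6 * x)) * (1 + 3 * x + 9 * x ^ 2 / 2) ^ 2) ∧
    2 / 3 < (∫ ω, (⨅ i, V i ω) ∂μ) ∧
    (∫ ω, V 0 ω ∂μ) / (∫ ω, (⨅ i, V i ω) ∂μ)
      < (∫ ω, U 0 ω ∂μ) / (∫ ω, (⨅ i, U i ω) ∂μ) := by
  have hU_law : ∀ i, μ.map (U i) = uniform02 := hdistU
  have hV_law : ∀ i, μ.map (V i) = erlang33 := hdistV
  have hmeanU : ∫ ω, U 0 ω ∂μ = 1 :=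
    (integral_comp_eq_of_map_eq (hU 0) (hU_law 0) measurable_id).trans integral_id_uniform02
  have hmeanV : ∫ ω, V 0 ω ∂μ = 1 :=
    (integral_comp_eq_of_map_eq (hV 0) (hV_law 0) measurable_id).trans integral_id_erlang33
  have hvarU : ∫ ω, (U 0 ω - 1) ^ 2 ∂μ = 1 / 3 :=
    (integral_comp_eq_of_map_eq (hU 0) (hU_law 0) (by fun_prop)).trans
      integral_sub_one_sq_uniform02
  have hvarV : ∫ ω, (V 0 ω - 1) ^ 2 ∂μ = 1 / 3 :=
    (integral_comp_eq_of_map_eq (hV 0) (hV_law 0) (by fun_prop)).trans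
      integral_sub_one_sq_erlang33
  have hminU : ∫ ω, (⨅ i, U i ω) ∂μ = 2 / 3 := by
    simp_rw [ciInf_fin_two]
    rw [integral_min_eq_integral_measureReal_Ioi_sq (hU 0) (hU 1) (hindepU.indepFun zero_ne_one)
      (hU_law 0) (hU_law 1) ae_nonneg_uniform02
      (integrable_of_integral_eq_one integral_id_uniform02), integral_uniform02_real_Ioi_sq]
  have hminV : ∫ ω, (⨅ i, V i ω) ∂μ
      = ∫ x in Ioi 0, exp (-(6 * x)) * (1 + 3 * x + 9 * x ^ 2 / 2) ^ 2 := by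
    simp_rw [ciInf_fin_two]
    rw [integral_min_eq_integral_measureReal_Ioi_sq (hV 0) (hV 1) (hindepV.indepFun zero_ne_one)
      (hV_law 0) (hV_law 1) ae_nonneg_erlang33
      (integrable_of_integral_eq_one integral_id_erlang33), integral_erlang33_real_Ioi_sq]
  have hcv : √(1 / 3) / 1 = 1 / √3 := by rw [div_one, sqrt_div' _ zero_le_three, sqrt_one]
  refine ⟨hmeanU, hmeanV, hvarU, hvarV, by rw [hvarU, hmeanU, hcv], by rw [hvarV, hmeanV, hcv],
    hminU, hminV, ?_, ?_⟩ <;>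
  rw [hminV, integral_Ioi_exp_neg_six_mul_mul_sq]
  · norm_num
  · rw [hmeanU, hmeanV, hminU]; norm_num

theorem same_cv_different_speedup {Ω : Type*} [MeasurableSpace Ω] (μ : Measure Ω)
    [IsProbabilityMeasure μ]
    (U V : Fin 2 → Ω → ℝ)
    (hU : ∀ i, Measurable (U i)) (hV : ∀ i, Measurable (V i))
    (hindepU : iIndepFun U μ)
    (hindepV : iIndepFun V μ)
    (hdistU : ∀ i, μ.map (U i) = ENNReal.ofReal (1 / 2) • volume.restrict (Icc (0:ℝ) 2))
    (hdistV : ∀ i, μ.map (V i) = volume.withDensity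
      (fun x => ENNReal.ofReal (if 0 ≤ x then (27 / 2) * x ^ 2 * Real.exp (-(3 * x)) else 0))) :
    (∫ ω, U 0 ω ∂μ) = 1 ∧ (∫ ω, V 0 ω ∂μ) = 1 ∧
    (∫ ω, (U 0 ω - 1) ^ 2 ∂μ) = 1 / 3 ∧ (∫ ω, (V 0 ω - 1) ^ 2 ∂μ) = 1 / 3 ∧
    Real.sqrt (∫ ω, (U 0 ω - 1) ^ 2 ∂μ) / (∫ ω, U 0 ω ∂μ) = 1 / Real.sqrt 3 ∧
    Real.sqrt (∫ ω, (V 0 ω - 1) ^ 2 ∂μ) / (∫ ω, V 0 ω ∂μ) = 1 / Real.sqrt 3 ∧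
    (∫ ω, (⨅ i, U i ω) ∂μ) = 2 / 3 ∧
    (∫ ω, (⨅ i, V i ω) ∂μ)
      = (∫ x in Ioi (0:ℝ), Real.exp (-(6 * x)) * (1 + 3 * x + 9 * x ^ 2 / 2) ^ 2) ∧
    2 / 3 < (∫ ω, (⨅ i, V i ω) ∂μ) ∧
    (∫ ω, V 0 ω ∂μ) / (∫ ω, (⨅ i, V i ω) ∂μ)
      < (∫ ω, U 0 ω ∂μ) / (∫ ω, (⨅ i, U i ω) ∂μ) :=
  same_cv_different_speedup_general μ U V hU hV hindepU hindepV hdistU hdistV
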